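/- Let R be a commutative ring, I an ideal of R, ℓ ≥ 2, and suppose SR_{2ℓ−1}(I) holds. Then for every I-unimodular column v ∈ R^{2ℓ} there exist matrices h₁, h₂ ∈ Sp(2ℓ,R) with h₁ ≡ 1 (mod I) and h₂ ≡ 1 (mod I), where h₁ − 1 has nonzero entries only in row 1 and column 2ℓ, and h₂ − 1 has nonzero entries only in column 1 and row 2ℓ, and an element s ∈ I, such that the column w = h₂·h₁·v satisfies w₁ = 1 + s and w_{2ℓ} = s. (First-column reduction in the proof of the Bass–Kolster decomposition, case Φ = C_ℓ.) -/

import Mathlib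

/-!
Both matrices are Eichler–Siegel–Dickson transvections `x ↦ x + ⟨e,x⟩u + (⟨u,x⟩ + μ⟨e,x⟩)e`
of the alternating form `⟨x,y⟩ = xᵀJy`, with `e = e₁` resp. `e = e_{2ℓ}` and `⟨e,u⟩ = 0`.

`SR_{2ℓ-1}(I)` gives `b ∈ I^{2ℓ}` with `b_{2ℓ} = 0` such that the first `2ℓ-1` entries of
`v + v_{2ℓ} b` generate `R`. The transvection `h₁` along `e₁` maps `v` to
`w = v + v_{2ℓ} b + ⟨u,w⟩ e₁`, where `u` is `b` with its first entry removed; as `⟨u,·⟩` only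
involves the middle coordinates, the first `2ℓ-1` entries of `w` still generate `R`. So there is
`d ∈ I^{2ℓ}` with `d_{2ℓ} = 0` and `d·w = w₁ - 1 - w_{2ℓ}`, and the transvection `h₂` along `e_{2ℓ}`
whose last row is `e_{2ℓ} + d` fixes `w₁` and replaces `w_{2ℓ}` by `w₁ - 1`.
-/

open Matrix

/-- A row (or column) `a` is `I`-unimodular. -/
def IsIUnimodular {R : Type*} [CommRing R] (I : Ideal R) {n : ℕ} (a : Fin n → R) : Prop :=
  (∀ i : Fin n, (i : ℕ) = 0 → a i - 1 ∈ I) ∧ (∀ i : Fin n, (i : ℕ) ≠ 0 → a i ∈ I) ∧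
    Ideal.span (Set.range a) = ⊤

/-- The relative stable range condition `SRₙ(I)`. -/
def SRCond {R : Type*} [CommRing R] (n : ℕ) (I : Ideal R) : Prop :=
  ∀ a : Fin (n + 1) → R, IsIUnimodular I a →
    ∃ b : Fin n → R, (∀ i, b i ∈ I) ∧
      IsIUnimodular I (fun i : Fin n => a i.castSucc + a (Fin.last n) * b i)

/-- `g ≡ 1 (mod I)`, entrywise. -/
def ModI {R : Type*} [CommRing R] (I : Ideal R) {n : ℕ} (g : Matrix (Fin n) (Fin n) R) : Prop :=
  ∀ i j, g i j - (1 : Matrix (Fin n) (Fin n) R) i j ∈ I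

/-- The antidiagonal symplectic form. -/
def Jform (R : Type*) [CommRing R] (l : ℕ) : Matrix (Fin (2 * l)) (Fin (2 * l)) R :=
  fun i j => if (j : ℕ) = 2 * l - 1 - (i : ℕ) then (if (i : ℕ) < l then 1 else -1) else 0

section Eichler
variable {R n : Type*} [CommRing R] [Fintype n] [DecidableEq n]

def eichlerTransvection (K : Matrix n n R) (e u : n → R) (μ : R) : Matrix n n R :=
  1 + vecMulVec u (e ᵥ* K) + vecMulVec e (u ᵥ* K + μ • (e ᵥ* K))

variable (K : Matrix n n R) (e u : n → R) (μ : R)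

lemma eichlerTransvection_sub_one_apply (i j : n) :
    (eichlerTransvection K e u μ - 1) i j =
      u i * (e ᵥ* K) j + e i * ((u ᵥ* K) j + μ * (e ᵥ* K) j) := by
  simp [eichlerTransvection, vecMulVec_apply, add_sub_right_comm]

lemma eichlerTransvection_mulVec (x : n → R) :
    eichlerTransvection K e u μ *ᵥ x =
      x + ((e ᵥ* K) ⬝ᵥ x) • u + ((u ᵥ* K) ⬝ᵥ x + μ * ((e ᵥ* K) ⬝ᵥ x)) • e := by
  simp only [eichlerTransvection, add_mulVec, one_mulVec, vecMulVec_mulVec, op_smul_eq_smul,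
    add_dotProduct, smul_dotProduct, smul_eq_mul, add_assoc]

lemma eichlerTransvection_transpose_mul_mul_self (hskew : Kᵀ = -K)
    (halt : ∀ x, (x ᵥ* K) ⬝ᵥ x = 0) (heu : (e ᵥ* K) ⬝ᵥ u = 0) :
    (eichlerTransvection K e u μ)ᵀ * K * eichlerTransvection K e u μ = K := by
  have hK : ∀ x, K *ᵥ x = -(x ᵥ* K) := fun x => by
    rw [← vecMul_transpose, hskew, vecMul_neg]
  have hue : (u ᵥ* K) ⬝ᵥ e = 0 := by
    rw [← dotProduct_mulVec, hK, dotProduct_neg, dotProduct_comm, heu, neg_zero]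
  set a := e ᵥ* K
  set β := u ᵥ* K
  set N := vecMulVec u a + vecMulVec e (β + μ • a)
  have hNK : Nᵀ * K = vecMulVec a β + vecMulVec (β + μ • a) a := by
    rw [transpose_add, transpose_vecMulVec, transpose_vecMulVec, add_mul, vecMulVec_mul,
      vecMulVec_mul]
  have hKN : K * N = -(vecMulVec β a + vecMulVec a (β + μ • a)) := by
    rw [mul_add, mul_vecMulVec, mul_vecMulVec, hK, hK, neg_vecMulVec, neg_vecMulVec, neg_add]
  have hNKN : Nᵀ * K * N = 0 := by
    have huu : β ⬝ᵥ u = 0 := halt u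
    have hee : a ⬝ᵥ e = 0 := halt e
    rw [hNK]
    simp only [N, add_mul, mul_add, vecMulVec_mul_vecMulVec, heu, hue, huu, hee, zero_smul,
      vecMulVec_zero, add_zero]
  have hsum : Nᵀ * K + K * N = 0 := by
    rw [hNK, hKN]
    ext i j
    simp only [neg_add_rev, Matrix.add_apply, vecMulVec_apply, Pi.add_apply, Pi.smul_apply,
      smul_eq_mul, Matrix.neg_apply, Matrix.zero_apply]
    ring
  rw [show eichlerTransvection K e u μ = 1 + N from add_assoc _ _ _]
  calc (1 + N)ᵀ * K * (1 + N) = K + (Nᵀ * K + K * N) + Nᵀ * K * N := by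
        rw [transpose_add, transpose_one]; noncomm_ring
    _ = K := by rw [hsum, hNKN, add_zero, add_zero]

lemma eichlerTransvection_sub_one_apply_eq_zero {i j : n} (hi : e i = 0)
    (hj : (e ᵥ* K) j = 0) : (eichlerTransvection K e u μ - 1) i j = 0 := by
  rw [eichlerTransvection_sub_one_apply, hi, hj]
  ring

end Eichler

section Jform
variable {R : Type*} [CommRing R] {l : ℕ}

lemma Jform_transpose : (Jform R l)ᵀ = -Jform R l := by
  ext i j
  simp only [transpose_apply, Matrix.neg_apply, Jform]
  split_ifs <;> first | omega | simp

lemma vecMul_Jform_apply (y : Fin (2 * l) → R) (j : Fin (2 * l)) :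
    (y ᵥ* Jform R l) j = (if (j : ℕ) < l then -1 else 1) * y j.rev := by
  rw [vecMul, dotProduct, Finset.sum_eq_single j.rev]
  · simp only [Jform, Fin.val_rev]
    split_ifs <;> first | omega | ring
  · intro i _ hi
    have : (j : ℕ) ≠ 2 * l - 1 - i := fun h => hi (Fin.ext (by simp only [Fin.val_rev]; omega))
    simp [Jform, this]
  · simp

lemma vecMul_Jform_vecMul_Jform (y : Fin (2 * l) → R) : y ᵥ* Jform R l ᵥ* Jform R l = -y := by
  ext j
  rw [vecMul_Jform_apply, vecMul_Jform_apply, Fin.rev_rev, Fin.val_rev]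
  split_ifs <;> first | omega | simp

lemma dotProduct_vecMul_Jform_self (x : Fin (2 * l) → R) : (x ᵥ* Jform R l) ⬝ᵥ x = 0 := by
  refine Finset.sum_ninvolution Fin.rev (fun j => ?_) (fun j _ => ?_) (fun _ => Finset.mem_univ _)
    Fin.rev_rev
  · rw [vecMul_Jform_apply, vecMul_Jform_apply, Fin.rev_rev, Fin.val_rev]
    split_ifs <;> first | omega | ring
  · exact fun h => by have := congrArg Fin.val h; simp only [Fin.val_rev] at this; omega

variable {o ω : Fin (2 * l)}

lemma vecMul_Jform_apply_first (ho : (o : ℕ) = 0) (hω : (ω : ℕ) = 2 * l - 1)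
    (y : Fin (2 * l) → R) : (y ᵥ* Jform R l) o = -y ω := by
  rw [vecMul_Jform_apply, if_pos (by omega), show o.rev = ω from Fin.ext (by simp; omega)]
  ring

lemma vecMul_Jform_apply_last (ho : (o : ℕ) = 0) (hω : (ω : ℕ) = 2 * l - 1)
    (y : Fin (2 * l) → R) : (y ᵥ* Jform R l) ω = y o := by
  rw [vecMul_Jform_apply, if_neg (by omega), show ω.rev = o from Fin.ext (by simp; omega)]
  ring

lemma single_first_vecMul_Jform (ho : (o : ℕ) = 0) (hω : (ω : ℕ) = 2 * l - 1) :
    Pi.single o 1 ᵥ* Jform R l = Pi.single ω 1 := by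
  ext j
  rw [vecMul_Jform_apply]
  simp only [Pi.single_apply, Fin.ext_iff, Fin.val_rev]
  split_ifs <;> first | omega | simp

lemma single_last_vecMul_Jform (ho : (o : ℕ) = 0) (hω : (ω : ℕ) = 2 * l - 1) :
    Pi.single ω 1 ᵥ* Jform R l = -Pi.single o 1 := by
  ext j
  rw [vecMul_Jform_apply]
  simp only [Pi.single_apply, Fin.ext_iff, Fin.val_rev, Pi.neg_apply]
  split_ifs <;> first | omega | simp

end Jform

section Reduction
variable {R : Type*} [CommRing R] {I : Ideal R}

lemma ModI.mulVec_sub_mem {n : ℕ} {h : Matrix (Fin n) (Fin n) R} (hh : ModI I h)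
    (v : Fin n → R) (i : Fin n) : (h *ᵥ v) i - v i ∈ I := by
  rw [← Pi.sub_apply, ← one_mulVec v, mulVec_mulVec, mul_one, ← sub_mulVec, mulVec, dotProduct]
  exact Ideal.sum_mem _ fun j _ => I.mul_mem_right (v j) (hh i j)

lemma modI_eichlerTransvection {n : ℕ} (K : Matrix (Fin n) (Fin n) R) (e : Fin n → R)
    {u : Fin n → R} {μ : R} (hu : ∀ i, u i ∈ I) (hμ : μ ∈ I) :
    ModI I (eichlerTransvection K e u μ) := by
  intro i j
  rw [← Matrix.sub_apply, eichlerTransvection_sub_one_apply]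
  have huK : (u ᵥ* K) j ∈ I := by
    rw [vecMul, dotProduct]
    exact Ideal.sum_mem _ fun k _ => I.mul_mem_right (K k j) (hu k)
  exact add_mem (I.mul_mem_right _ (hu i))
    (I.mul_mem_left _ (add_mem huK (I.mul_mem_right _ hμ)))

lemma SRCond.exists_dotProduct_eq_one {n m : ℕ} (hSR : SRCond n I) (hm : n + 1 = m)
    {v : Fin m → R} (hv : IsIUnimodular I v) {ω : Fin m} (hω : (ω : ℕ) = n) :
    ∃ b c : Fin m → R, (∀ i, b i ∈ I) ∧ b ω = 0 ∧ c ω = 0 ∧ c ⬝ᵥ (v + v ω • b) = 1 := by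
  subst hm
  obtain rfl : ω = Fin.last n := Fin.ext hω
  obtain ⟨b, hbI, -, -, hspan⟩ := hSR v hv
  have h1 : (1 : R) ∈ Ideal.span (Set.range fun i : Fin n =>
      v i.castSucc + v (Fin.last n) * b i) := hspan ▸ Submodule.mem_top
  obtain ⟨c, hc⟩ := (Submodule.mem_span_range_iff_exists_fun R).mp h1
  refine ⟨Fin.snoc b 0, Fin.snoc c 0, Fin.lastCases (by simp) (by simpa using hbI), by simp,
    by simp, ?_⟩
  simpa [dotProduct, Fin.sum_univ_castSucc] using hc

lemma sub_smul_dotProduct_of_eq_add_single {n : Type*} [Fintype n] [DecidableEq n]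
    {a c v w : n → R} {i : n} (hw : w = v + Pi.single i (a ⬝ᵥ w)) :
    (c - c i • a) ⬝ᵥ w = c ⬝ᵥ v := by
  conv_lhs => rw [sub_dotProduct, smul_dotProduct]; enter [1]; rw [hw]
  rw [dotProduct_add, dotProduct_single, smul_eq_mul]
  ring

variable {l : ℕ} {o ω : Fin (2 * l)}

lemma exists_symplectic_dotProduct_mulVec_eq_one (ho : (o : ℕ) = 0)
    (hω : (ω : ℕ) = 2 * l - 1) {b c v : Fin (2 * l) → R} (hbI : ∀ i, b i ∈ I) (hbω : b ω = 0)
    (hcω : c ω = 0) (hc : c ⬝ᵥ (v + v ω • b) = 1) :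
    ∃ h : Matrix (Fin (2 * l)) (Fin (2 * l)) R, hᵀ * Jform R l * h = Jform R l ∧ ModI I h ∧
      (∀ i j, i ≠ o → j ≠ ω → (h - 1) i j = 0) ∧ ∃ d, d ω = 0 ∧ d ⬝ᵥ (h *ᵥ v) = 1 := by
  have hoω : o ≠ ω := fun h => by have := congrArg Fin.val h; omega
  set u := Function.update b o 0
  have huo : u o = 0 := Function.update_self ..
  have huω : u ω = 0 := (Function.update_of_ne hoω.symm 0 b).trans hbω
  have hJ := single_first_vecMul_Jform (R := R) ho hω
  set h := eichlerTransvection (Jform R l) (Pi.single o 1) u (b o)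
  refine ⟨h, ?_, modI_eichlerTransvection _ _ (fun i => ?_) (hbI o), fun i j hi hj => ?_, ?_⟩
  · refine eichlerTransvection_transpose_mul_mul_self _ _ _ _ Jform_transpose
      dotProduct_vecMul_Jform_self ?_
    rw [hJ, single_dotProduct, one_mul, huω]
  · simp only [u, Function.update_apply]
    split_ifs
    exacts [I.zero_mem, hbI i]
  · exact eichlerTransvection_sub_one_apply_eq_zero _ _ _ _ (Pi.single_eq_of_ne hi 1)
      (by rw [hJ]; exact Pi.single_eq_of_ne hj 1)
  have hT : (u ᵥ* Jform R l) ⬝ᵥ (h *ᵥ v) = (u ᵥ* Jform R l) ⬝ᵥ v := by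
    rw [eichlerTransvection_mulVec, hJ]
    simp [dotProduct_vecMul_Jform_self, vecMul_Jform_apply_first ho hω, huω]
  have hw : h *ᵥ v = v + v ω • b + Pi.single o ((u ᵥ* Jform R l) ⬝ᵥ (h *ᵥ v)) := by
    rw [hT, eichlerTransvection_mulVec, hJ, single_dotProduct, one_mul]
    ext i
    by_cases hi : i = o
    · subst hi
      simp only [Pi.add_apply, Pi.smul_apply, huo, smul_eq_mul, Pi.single_eq_same]
      ring
    · simp [Pi.single_eq_of_ne hi, u, Function.update_of_ne hi]
  refine ⟨c - c o • (u ᵥ* Jform R l), ?_, by rw [sub_smul_dotProduct_of_eq_add_single hw, hc]⟩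
  simp [hcω, vecMul_Jform_apply_last ho hω, huo]

lemma exists_symplectic_mulVec_last_eq_add (ho : (o : ℕ) = 0) (hω : (ω : ℕ) = 2 * l - 1)
    {w d : Fin (2 * l) → R} {t : R} (ht : t ∈ I) (hdω : d ω = 0) (hd : d ⬝ᵥ w = 1) :
    ∃ h : Matrix (Fin (2 * l)) (Fin (2 * l)) R, hᵀ * Jform R l * h = Jform R l ∧ ModI I h ∧
      (∀ i j, j ≠ o → i ≠ ω → (h - 1) i j = 0) ∧ (h *ᵥ w) o = w o ∧ (h *ᵥ w) ω = w ω + t := by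
  have hoω : o ≠ ω := fun h => by have := congrArg Fin.val h; omega
  have hJ := single_last_vecMul_Jform (R := R) ho hω
  set d' := t • d
  have hd'I : ∀ i, d' i ∈ I := fun i => I.mul_mem_right _ ht
  set h := eichlerTransvection (Jform R l) (Pi.single ω 1) (-(d' ᵥ* Jform R l)) (d' o)
  refine ⟨h, ?_, modI_eichlerTransvection _ _ (fun i => ?_) (hd'I o), fun i j hj hi => ?_, ?_⟩
  · refine eichlerTransvection_transpose_mul_mul_self _ _ _ _ Jform_transpose
      dotProduct_vecMul_Jform_self ?_
    simp [hJ, vecMul_Jform_apply_first ho hω, d', hdω]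
  · rw [Pi.neg_apply, vecMul_Jform_apply]
    exact neg_mem (I.mul_mem_left _ (hd'I _))
  · exact eichlerTransvection_sub_one_apply_eq_zero _ _ _ _ (Pi.single_eq_of_ne hi 1)
      (by rw [hJ, Pi.neg_apply, Pi.single_eq_of_ne hj, neg_zero])
  have hw : h *ᵥ w = w + w o • (d' ᵥ* Jform R l) + (t - d' o * w o) • Pi.single ω 1 := by
    have hd' : d' ⬝ᵥ w = t := by rw [smul_dotProduct, hd, smul_eq_mul, mul_one]
    rw [eichlerTransvection_mulVec, hJ, neg_vecMul, vecMul_Jform_vecMul_Jform, neg_neg, hd']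
    ext i
    simp only [Pi.add_apply, Pi.smul_apply, Pi.neg_apply, neg_dotProduct, single_dotProduct,
      smul_eq_mul]
    ring
  constructor
  · simp [hw, vecMul_Jform_apply_first ho hω, d', hdω, Pi.single_eq_of_ne hoω]
  · simp only [hw, Pi.add_apply, Pi.smul_apply, vecMul_Jform_apply_last ho hω, smul_eq_mul,
      Pi.single_eq_same]
    ring

end Reduction

/-- First-column reduction in the Bass–Kolster decomposition, case `C_ℓ`. -/
theorem bass_kolster_column_reduction_Sp {R : Type*} [CommRing R] (I : Ideal R) (l : ℕ)
    (hl : 2 ≤ l) (hSR : SRCond (2 * l - 1) I)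
    (v : Fin (2 * l) → R) (hv : IsIUnimodular I v) :
    ∃ (h₁ h₂ : Matrix (Fin (2 * l)) (Fin (2 * l)) R) (s : R),
      s ∈ I ∧
      h₁ᵀ * Jform R l * h₁ = Jform R l ∧
      h₂ᵀ * Jform R l * h₂ = Jform R l ∧
      ModI I h₁ ∧ ModI I h₂ ∧
      -- h₁ − 1 is supported on row 1 and column 2ℓ
      (∀ i j : Fin (2 * l), i ≠ ⟨0, by omega⟩ → j ≠ ⟨2 * l - 1, by omega⟩ →
        (h₁ - 1) i j = 0) ∧
      -- h₂ − 1 is supported on column 1 and row 2ℓ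
      (∀ i j : Fin (2 * l), j ≠ ⟨0, by omega⟩ → i ≠ ⟨2 * l - 1, by omega⟩ →
        (h₂ - 1) i j = 0) ∧
      h₂.mulVec (h₁.mulVec v) ⟨0, by omega⟩ = 1 + s ∧
      h₂.mulVec (h₁.mulVec v) ⟨2 * l - 1, by omega⟩ = s := by
  set o : Fin (2 * l) := ⟨0, by omega⟩
  set ω : Fin (2 * l) := ⟨2 * l - 1, by omega⟩
  obtain ⟨b, c, hbI, hbω, hcω, hc⟩ := hSR.exists_dotProduct_eq_one (by omega) hv (ω := ω) rfl
  obtain ⟨h₁, hsymp₁, hmod₁, hsupp₁, d, hdω, hd⟩ :=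
    exists_symplectic_dotProduct_mulVec_eq_one (o := o) rfl rfl hbI hbω hcω hc
  set w := h₁ *ᵥ v
  have hwo : w o - 1 ∈ I := by
    simpa using add_mem (hmod₁.mulVec_sub_mem v o) (hv.1 o rfl)
  have hwω : w ω ∈ I := by
    simpa using add_mem (hmod₁.mulVec_sub_mem v ω) (hv.2.1 ω (show 2 * l - 1 ≠ 0 by omega))
  obtain ⟨h₂, hsymp₂, hmod₂, hsupp₂, hw₂o, hw₂ω⟩ :=
    exists_symplectic_mulVec_last_eq_add (o := o) rfl rfl (sub_mem hwo hwω) hdω hd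
  refine ⟨h₁, h₂, w o - 1, hwo, hsymp₁, hsymp₂, hmod₁, hmod₂, hsupp₁, hsupp₂, ?_, ?_⟩
  · rw [hw₂o]; ring
  · rw [hw₂ω]; ring
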